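/- The non-size-increasing property: suppose Γ ⊢ M : A in LFPL+. Then for all environments V, values v, and costs c such that V ⊢ M ⇓^c v, the size of v is at most the size of V, i.e. |v| ≤ |V|. -/
import Mathlib


/-! # LFPL⁺: syntax, values, and big-step operational cost semantics -/

/-- LFPL⁺ types: diamond, unit, sums, tensor products, linear functions,
lists, lazy products, stacks, and binary trees. -/
inductive Tp : Type
  | dia : Tp
  | unit : Tp
  | sum (A B : Tp) : Tp
  | tens (A B : Tp) : Tp
  | arr (A B : Tp) : Tp
  | list (A : Tp) : Tp
  | prod (A B : Tp) : Tp
  | stack (A : Tp) : Tp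
  | tree (A : Tp) : Tp

/-- Typing contexts: a list of declarations; `none` marks an unusable slot
(used for context splitting in the affine type system). -/
abbrev Ctx := List (Option Tp)

/-- De Bruijn variable lookup. -/
inductive Lk : Ctx → Tp → Type
  | here {A : Tp} {G : Ctx} : Lk (some A :: G) A
  | there {o : Option Tp} {A : Tp} {G : Ctx} : Lk G A → Lk (o :: G) A

/-- Splitting a context into two halves (each declared variable is usable in
exactly one half): this enforces the affine discipline. -/
inductive Split : Ctx → Ctx → Ctx → Type
  | nil : Split [] [] []
  | skip {G G1 G2} : Split G G1 G2 → Split (none :: G) (none :: G1) (none :: G2)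
  | left {A : Tp} {G G1 G2} : Split G G1 G2 → Split (some A :: G) (some A :: G1) (none :: G2)
  | right {A : Tp} {G G1 G2} : Split G G1 G2 → Split (some A :: G) (none :: G1) (some A :: G2)

/-- Intrinsically typed LFPL⁺ terms: `Term G A` are the terms `M` with
`G ⊢ M : A`.  The `cons` and `node` constructors take an extra argument of
type `◆`; the step case of the list recursor is typed in a context containing
only the diamond, head, and recursive-result variables; the base case of the
tree recursor is typed in the empty context. -/
inductive Term : Ctx → Tp → Type
  | var {G A} : Lk G A → Term G A
  | null {G} : Term G .unit
  | inj1 {G A B} : Term G A → Term G (.sum A B)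
  | inj2 {G A B} : Term G B → Term G (.sum A B)
  | scase {G G1 G2 A B C} : Split G G1 G2 → Term G1 (.sum A B) →
      Term (some A :: G2) C → Term (some B :: G2) C → Term G C
  | pair {G G1 G2 A B} : Split G G1 G2 → Term G1 A → Term G2 B → Term G (.tens A B)
  | letp {G G1 G2 A B C} : Split G G1 G2 → Term G1 (.tens A B) →
      Term (some B :: some A :: G2) C → Term G C
  | lam {G A B} : Term (some A :: G) B → Term G (.arr A B)
  | app {G G1 G2 A B} : Split G G1 G2 → Term G1 (.arr A B) → Term G2 A → Term G B
  | nil {G A} : Term G (.list A)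
  | cons {G G1 G23 G2 G3 A} : Split G G1 G23 → Split G23 G2 G3 →
      Term G1 .dia → Term G2 A → Term G3 (.list A) → Term G (.list A)
  | lrec {G G1 G2 A B} : Split G G1 G2 → Term G1 (.list A) → Term G2 B →
      Term [some B, some A, some .dia] B → Term G B
  | record {G A B} : Term G A → Term G B → Term G (.prod A B)
  | proj1 {G A B} : Term G (.prod A B) → Term G A
  | proj2 {G A B} : Term G (.prod A B) → Term G B
  | empty {G A} : Term G (.stack A)
  | push {G G1 G2 A} : Split G G1 G2 → Term G1 A → Term G2 (.stack A) → Term G (.stack A)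
  | pop {G G1 G2 A B} : Split G G1 G2 → Term G1 (.stack A) → Term G2 B →
      Term (some (.stack A) :: some A :: G2) B → Term G B
  | leaf {G A} : Term G (.tree A)
  | node {G G1 G234 G2 G34 G3 G4 A} : Split G G1 G234 → Split G234 G2 G34 →
      Split G34 G3 G4 → Term G1 .dia → Term G2 A → Term G3 (.tree A) →
      Term G4 (.tree A) → Term G (.tree A)
  | trec {G A B} : Term G (.tree A) → Term ([] : Ctx) B →
      Term [some B, some B, some A, some .dia] B → Term G B

mutual
  /-- LFPL⁺ values (intrinsically typed), defined mutually with environments.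
  Function and lazy-pair closures capture an environment; list and tree values
  store no diamond component. -/
  inductive Value : Tp → Type
    | dia : Value .dia
    | null : Value .unit
    | record {G A B} : Env G → Term G A → Term G B → Value (.prod A B)
    | inj1 {A B} : Value A → Value (.sum A B)
    | inj2 {A B} : Value B → Value (.sum A B)
    | pair {A B} : Value A → Value B → Value (.tens A B)
    | clos {G A B} : Env G → Term (some A :: G) B → Value (.arr A B)
    | sempty {A} : Value (.stack A)
    | spush {A} : Value A → Value (.stack A) → Value (.stack A)
    | nil {A} : Value (.list A)
    | cons {A} : Value A → Value (.list A) → Value (.list A)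
    | leaf {A} : Value (.tree A)
    | node {A} : Value A → Value (.tree A) → Value (.tree A) → Value (.tree A)

  /-- Environments: a value for each declared variable of the context. -/
  inductive Env : Ctx → Type
    | nil : Env []
    | cons {A G} : Value A → Env G → Env (some A :: G)
    | skip {G} : Env G → Env (none :: G)
end

/-- Environment lookup. -/
def Env.lk : {G : Ctx} → {A : Tp} → Env G → Lk G A → Value A
  | _, _, .cons v _, .here => v
  | _, _, .cons _ V, .there l => V.lk l
  | _, _, .skip V, .there l => V.lk l

/-- First half of an environment along a context split. -/
def Env.split1 : {G G1 G2 : Ctx} → Split G G1 G2 → Env G → Env G1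
  | _, _, _, .nil, _ => .nil
  | _, _, _, .skip s, .skip V => .skip (V.split1 s)
  | _, _, _, .left s, .cons v V => .cons v (V.split1 s)
  | _, _, _, .right s, .cons _ V => .skip (V.split1 s)

/-- Second half of an environment along a context split. -/
def Env.split2 : {G G1 G2 : Ctx} → Split G G1 G2 → Env G → Env G2
  | _, _, _, .nil, _ => .nil
  | _, _, _, .skip s, .skip V => .skip (V.split2 s)
  | _, _, _, .left s, .cons _ V => .skip (V.split2 s)
  | _, _, _, .right s, .cons v V => .cons v (V.split2 s)

/-- A generic cost model: one fixed cost constant per syntactic construct. -/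
structure CostModel : Type where
  kvar : ℕ
  knull : ℕ
  kinj1 : ℕ
  kinj2 : ℕ
  kcase : ℕ
  kpair : ℕ
  kletp : ℕ
  klam : ℕ
  kapp : ℕ
  knil : ℕ
  kcons : ℕ
  krec : ℕ
  krecord : ℕ
  kproj1 : ℕ
  kproj2 : ℕ
  kempty : ℕ
  kpush : ℕ
  kpop : ℕ
  kleaf : ℕ
  knode : ℕ
  ktrec : ℕ

mutual
  /-- The big-step operational cost semantics `V ⊢ M ⇓^c v`: term `M`
  evaluates under environment `V` to value `v` with cost `c`.  Each rule adds
  the cost constant of its construct and sums the costs of its premises.  The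
  step body of the list recursor is evaluated under an environment containing
  only the diamond value, the head value, and the recursive result; the step
  body of the tree recursor under only the diamond value, the label, and the
  two recursive results. -/
  inductive Evals (K : CostModel) : {G : Ctx} → {A : Tp} → Env G → Term G A → ℕ → Value A → Prop
    | var {G A} {V : Env G} (l : Lk G A) :
        Evals K V (.var l) K.kvar (V.lk l)
    | null {G} {V : Env G} : Evals K V .null K.knull .null
    | inj1 {G A B} {V : Env G} {M : Term G A} {c v} :
        Evals K V M c v → Evals K V (.inj1 (B := B) M) (c + K.kinj1) (.inj1 v)
    | inj2 {G A B} {V : Env G} {M : Term G B} {c v} :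
        Evals K V M c v → Evals K V (.inj2 (A := A) M) (c + K.kinj2) (.inj2 v)
    | case1 {G G1 G2 A B C} {V : Env G} {s : Split G G1 G2} {M : Term G1 (.sum A B)}
        {N1 : Term (some A :: G2) C} {N2 : Term (some B :: G2) C} {c c' v w} :
        Evals K (V.split1 s) M c (.inj1 v) →
        Evals K (.cons v (V.split2 s)) N1 c' w →
        Evals K V (.scase s M N1 N2) (c + c' + K.kcase) w
    | case2 {G G1 G2 A B C} {V : Env G} {s : Split G G1 G2} {M : Term G1 (.sum A B)}
        {N1 : Term (some A :: G2) C} {N2 : Term (some B :: G2) C} {c c' v w} :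
        Evals K (V.split1 s) M c (.inj2 v) →
        Evals K (.cons v (V.split2 s)) N2 c' w →
        Evals K V (.scase s M N1 N2) (c + c' + K.kcase) w
    | pair {G G1 G2 A B} {V : Env G} {s : Split G G1 G2} {M1 : Term G1 A}
        {M2 : Term G2 B} {c1 c2 v1 v2} :
        Evals K (V.split1 s) M1 c1 v1 → Evals K (V.split2 s) M2 c2 v2 →
        Evals K V (.pair s M1 M2) (c1 + c2 + K.kpair) (.pair v1 v2)
    | letp {G G1 G2 A B C} {V : Env G} {s : Split G G1 G2} {M : Term G1 (.tens A B)}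
        {N : Term (some B :: some A :: G2) C} {c c' v1 v2 w} :
        Evals K (V.split1 s) M c (.pair v1 v2) →
        Evals K (.cons v2 (.cons v1 (V.split2 s))) N c' w →
        Evals K V (.letp s M N) (c + c' + K.kletp) w
    | lam {G A B} {V : Env G} {M : Term (some A :: G) B} :
        Evals K V (.lam M) K.klam (.clos V M)
    | app {G G1 G2 G' A B} {V : Env G} {s : Split G G1 G2} {M : Term G1 (.arr A B)}
        {N : Term G2 A} {W : Env G'} {M' : Term (some A :: G') B} {c1 c2 c3 v w} :
        Evals K (V.split1 s) M c1 (.clos W M') →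
        Evals K (V.split2 s) N c2 v →
        Evals K (.cons v W) M' c3 w →
        Evals K V (.app s M N) (c1 + c2 + c3 + K.kapp) w
    | nil {G A} {V : Env G} : Evals K V (.nil (A := A)) K.knil .nil
    | cons {G G1 G23 G2 G3 A} {V : Env G} {s1 : Split G G1 G23} {s2 : Split G23 G2 G3}
        {Md : Term G1 .dia} {Mh : Term G2 A} {Mt : Term G3 (.list A)} {cd ch ct vh vt} :
        Evals K (V.split1 s1) Md cd .dia →
        Evals K ((V.split2 s1).split1 s2) Mh ch vh →
        Evals K ((V.split2 s1).split2 s2) Mt ct vt →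
        Evals K V (.cons s1 s2 Md Mh Mt) (cd + ch + ct + K.kcons) (.cons vh vt)
    | lrec {G G1 G2 A B} {V : Env G} {s : Split G G1 G2} {M : Term G1 (.list A)}
        {N1 : Term G2 B} {N2 : Term [some B, some A, some .dia] B} {c cr lv w} :
        Evals K (V.split1 s) M c lv →
        EvalsRec K (V.split2 s) N1 N2 lv cr w →
        Evals K V (.lrec s M N1 N2) (c + cr) w
    | record {G A B} {V : Env G} {M1 : Term G A} {M2 : Term G B} :
        Evals K V (.record M1 M2) K.krecord (.record V M1 M2)
    | proj1 {G G' A B} {V : Env G} {M : Term G (.prod A B)} {W : Env G'}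
        {M1 : Term G' A} {M2 : Term G' B} {c c' v} :
        Evals K V M c (.record W M1 M2) → Evals K W M1 c' v →
        Evals K V (.proj1 M) (c + c' + K.kproj1) v
    | proj2 {G G' A B} {V : Env G} {M : Term G (.prod A B)} {W : Env G'}
        {M1 : Term G' A} {M2 : Term G' B} {c c' v} :
        Evals K V M c (.record W M1 M2) → Evals K W M2 c' v →
        Evals K V (.proj2 M) (c + c' + K.kproj2) v
    | empty {G A} {V : Env G} : Evals K V (.empty (A := A)) K.kempty .sempty
    | push {G G1 G2 A} {V : Env G} {s : Split G G1 G2} {Mh : Term G1 A}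
        {Mt : Term G2 (.stack A)} {ch ct vh vt} :
        Evals K (V.split1 s) Mh ch vh → Evals K (V.split2 s) Mt ct vt →
        Evals K V (.push s Mh Mt) (ch + ct + K.kpush) (.spush vh vt)
    | pop1 {G G1 G2 A B} {V : Env G} {s : Split G G1 G2} {M : Term G1 (.stack A)}
        {N1 : Term G2 B} {N2 : Term (some (.stack A) :: some A :: G2) B} {c c' w} :
        Evals K (V.split1 s) M c .sempty →
        Evals K (V.split2 s) N1 c' w →
        Evals K V (.pop s M N1 N2) (c + c' + K.kpop) w
    | pop2 {G G1 G2 A B} {V : Env G} {s : Split G G1 G2} {M : Term G1 (.stack A)}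
        {N1 : Term G2 B} {N2 : Term (some (.stack A) :: some A :: G2) B} {c c' vh vt w} :
        Evals K (V.split1 s) M c (.spush vh vt) →
        Evals K (.cons vt (.cons vh (V.split2 s))) N2 c' w →
        Evals K V (.pop s M N1 N2) (c + c' + K.kpop) w
    | leaf {G A} {V : Env G} : Evals K V (.leaf (A := A)) K.kleaf .leaf
    | node {G G1 G234 G2 G34 G3 G4 A} {V : Env G} {s1 : Split G G1 G234}
        {s2 : Split G234 G2 G34} {s3 : Split G34 G3 G4} {Md : Term G1 .dia}
        {Mx : Term G2 A} {Ml : Term G3 (.tree A)} {Mr : Term G4 (.tree A)}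
        {cd cx cl cr vx vl vr} :
        Evals K (V.split1 s1) Md cd .dia →
        Evals K ((V.split2 s1).split1 s2) Mx cx vx →
        Evals K (((V.split2 s1).split2 s2).split1 s3) Ml cl vl →
        Evals K (((V.split2 s1).split2 s2).split2 s3) Mr cr vr →
        Evals K V (.node s1 s2 s3 Md Mx Ml Mr) (cd + cx + cl + cr + K.knode) (.node vx vl vr)
    | trec {G A B} {V : Env G} {M : Term G (.tree A)} {N1 : Term ([] : Ctx) B}
        {N2 : Term [some B, some B, some A, some .dia] B} {c cr tv w} :
        Evals K V M c tv →
        EvalsTree K N1 N2 tv cr w →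
        Evals K V (.trec M N1 N2) (c + cr) w

  /-- Iteration of the list recursor over a list value. -/
  inductive EvalsRec (K : CostModel) : {G2 : Ctx} → {A B : Tp} → Env G2 → Term G2 B →
      Term [some B, some A, some .dia] B → Value (.list A) → ℕ → Value B → Prop
    | nil {G2 A B} {V : Env G2} {N1 : Term G2 B}
        {N2 : Term [some B, some A, some .dia] B} {c w} :
        Evals K V N1 c w → EvalsRec K V N1 N2 .nil (c + K.krec) w
    | cons {G2 A B} {V : Env G2} {N1 : Term G2 B}
        {N2 : Term [some B, some A, some .dia] B} {vh vt ct c' wt w} :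
        EvalsRec K V N1 N2 vt ct wt →
        Evals K (.cons wt (.cons vh (.cons .dia .nil))) N2 c' w →
        EvalsRec K V N1 N2 (.cons vh vt) (ct + c' + K.kvar + K.krec) w

  /-- Iteration of the tree recursor over a tree value. -/
  inductive EvalsTree (K : CostModel) : {A B : Tp} → Term ([] : Ctx) B →
      Term [some B, some B, some A, some .dia] B → Value (.tree A) → ℕ → Value B → Prop
    | leaf {A B} {N1 : Term ([] : Ctx) B}
        {N2 : Term [some B, some B, some A, some .dia] B} {c w} :
        Evals K .nil N1 c w → EvalsTree K N1 N2 (.leaf (A := A)) (c + K.ktrec) w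
    | node {A B} {N1 : Term ([] : Ctx) B}
        {N2 : Term [some B, some B, some A, some .dia] B} {vx vl vr cl cr c' wl wr w} :
        EvalsTree K N1 N2 vl cl wl →
        EvalsTree K N1 N2 vr cr wr →
        Evals K (.cons wr (.cons wl (.cons vx (.cons .dia .nil)))) N2 c' w →
        EvalsTree K N1 N2 (.node vx vl vr) (cl + cr + c' + 2 * K.kvar + K.ktrec) w
end

mutual
  /-- The size of a value: the number of diamond values it contains.
  Closures have the size of their captured environment; list conses and tree
  nodes add `1` to the sizes of their components. -/
  def Value.size : {A : Tp} → Value A → ℕ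
    | _, .dia => 1
    | _, .null => 0
    | _, .record V _ _ => V.size
    | _, .inj1 v => v.size
    | _, .inj2 v => v.size
    | _, .pair v1 v2 => v1.size + v2.size
    | _, .clos V _ => V.size
    | _, .sempty => 0
    | _, .spush vh vt => vh.size + vt.size
    | _, .nil => 0
    | _, .cons vh vt => 1 + vh.size + vt.size
    | _, .leaf => 0
    | _, .node v vl vr => 1 + v.size + vl.size + vr.size

  /-- The size of an environment: the sum of the sizes of its values. -/
  def Env.size : {G : Ctx} → Env G → ℕ
    | _, .nil => 0
    | _, .cons v V => v.size + V.size
    | _, .skip V => V.size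
end

theorem Env.lk_size_le {G : Ctx} {A : Tp} (V : Env G) (l : Lk G A) :
    (V.lk l).size ≤ V.size := by
  induction l with
  | here => cases V with
    | cons v V => simp [Env.lk, Env.size]
  | there l ih =>
    cases V with
    | cons v V => simpa [Env.lk, Env.size] using le_add_left (ih V)
    | skip V => simpa [Env.lk, Env.size] using ih V

theorem Env.split_size {G G1 G2 : Ctx} (s : Split G G1 G2) (V : Env G) :
    (V.split1 s).size + (V.split2 s).size = V.size := by
  induction s with
  | nil => cases V; simp [Env.split1, Env.split2, Env.size]
  | skip s ih => cases V with
    | skip V => simpa [Env.split1, Env.split2, Env.size] using ih V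
  | left s ih => cases V with
    | cons v V => simp [Env.split1, Env.split2, Env.size, ← ih V]; omega
  | right s ih => cases V with
    | cons v V => simp [Env.split1, Env.split2, Env.size, ← ih V]; omega

theorem Env.split1_size_le {G G1 G2 : Ctx} (s : Split G G1 G2) (V : Env G) :
    (V.split1 s).size ≤ V.size := by
  rw [← Env.split_size s V]; omega

theorem Env.split2_size_le {G G1 G2 : Ctx} (s : Split G G1 G2) (V : Env G) :
    (V.split2 s).size ≤ V.size := by
  rw [← Env.split_size s V]; omega

/-- **The non-size-increasing property**: if `Γ ⊢ M : A` in LFPL⁺, then for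
all environments `V`, values `v`, and costs `c` with `V ⊢ M ⇓^c v`, we have
`|v| ≤ |V|`. -/
theorem non_size_increasing (K : CostModel) {G : Ctx} {A : Tp}
    (M : Term G A) (V : Env G) (v : Value A) (c : ℕ)
    (h : Evals K V M c v) :
    v.size ≤ V.size := by
  refine Evals.rec (K := K)
    (motive_1 := fun {G A} V M c v _ => v.size ≤ V.size)
    (motive_2 := fun {G2 A B} V N1 N2 lv c w _ => w.size ≤ V.size + lv.size)
    (motive_3 := fun {A B} N1 N2 tv c w _ => w.size ≤ tv.size)
    ?_ ?_ ?_ ?_ ?_ ?_ ?_ ?_ ?_ ?_ ?_ ?_ ?_ ?_ ?_ ?_ ?_ ?_ ?_ ?_ ?_ ?_ ?_ ?_ ?_ ?_ ?_ h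
  -- var
  · intros
    apply Env.lk_size_le
  -- null
  · intros
    simp [Value.size]
  -- inj1
  · intros
    rename_i ih; simpa [Value.size] using ih
  -- inj2
  · intros
    rename_i ih; simpa [Value.size] using ih
  -- case1
  · intros
    rename_i V s M N1 N2 c c' v w h1 h2 ih1 ih2
    have := Env.split_size s V
    simp [Value.size, Env.size] at ih1 ih2; omega
  -- case2
  · intros
    rename_i V s M N1 N2 c c' v w h1 h2 ih1 ih2
    have := Env.split_size s V
    simp [Value.size, Env.size] at ih1 ih2; omega
  -- pair
  · intros
    rename_i V s M1 M2 c1 c2 v1 v2 h1 h2 ih1 ih2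
    have := Env.split_size s V
    simp [Value.size]; omega
  -- letp
  · intros
    rename_i V s M N c c' v1 v2 w h1 h2 ih1 ih2
    have := Env.split_size s V
    simp [Value.size, Env.size] at ih1 ih2; omega
  -- lam
  · intros
    simp [Value.size]
  -- app
  · intros
    rename_i V s M N W M' c1 c2 c3 v w h1 h2 h3 ih1 ih2 ih3
    have := Env.split_size s V
    simp [Value.size] at ih1
    simp [Env.size] at ih3; omega
  -- nil
  · intros
    simp [Value.size]
  -- cons
  · intros
    rename_i V s1 s2 Md Mh Mt cd ch ct vh vt hd hh ht ihd ihh iht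
    have e1 := Env.split_size s1 V
    have e2 := Env.split_size s2 (V.split2 s1)
    simp [Value.size] at ihd ⊢; omega
  -- lrec
  · intros
    rename_i V s M N1 N2 c cr lv w h1 h2 ih1 ih2
    have := Env.split_size s V; omega
  -- record
  · intros
    simp [Value.size]
  -- proj1
  · intros
    rename_i ih1 ih2; simp [Value.size] at ih1; omega
  -- proj2
  · intros
    rename_i ih1 ih2; simp [Value.size] at ih1; omega
  -- empty
  · intros
    simp [Value.size]
  -- push
  · intros
    rename_i V s Mh Mt ch ct vh vt h1 h2 ih1 ih2
    have := Env.split_size s V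
    simp [Value.size]; omega
  -- pop1
  · intros
    rename_i V s M N1 N2 c c' w h1 h2 ih1 ih2
    have := Env.split_size s V; omega
  -- pop2
  · intros
    rename_i V s M N1 N2 c c' vh vt w h1 h2 ih1 ih2
    have := Env.split_size s V
    simp [Value.size, Env.size] at ih1 ih2; omega
  -- leaf
  · intros
    simp [Value.size]
  -- node
  · intros
    rename_i V s1 s2 s3 Md Mx Ml Mr cd cx cl cr vx vl vr h1 h2 h3 h4 ihd ihx ihl ihr
    have e1 := Env.split_size s1 V
    have e2 := Env.split_size s2 (V.split2 s1)
    have e3 := Env.split_size s3 ((V.split2 s1).split2 s2)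
    simp [Value.size] at ihd ⊢; omega
  -- trec
  · intros
    rename_i ih1 ih2; omega
  -- EvalsRec.nil
  · intros
    rename_i ih; simpa [Value.size] using ih
  -- EvalsRec.cons
  · intros
    rename_i ih1 ih2
    simp [Value.size, Env.size] at ih2 ⊢; omega
  -- EvalsTree.leaf
  · intros
    rename_i ih; simpa [Value.size, Env.size] using ih
  -- EvalsTree.node
  · intros
    rename_i ih1 ih2 ih3
    simp [Value.size, Env.size] at ih3 ⊢; omega
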